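/- Let m ≥ 1, let γ be a Schwartz function on ℝ^m × ℝ and σ a Schwartz function on ℝ. Then for every x ∈ ℝ^m, after the change of variables (a,ω) = (ξ/ω, ω), the integral representation S[γ](x) := ∫_{ℝ^m×ℝ} γ(a,b)·σ(a·x − b) da db equals (2π)^{−1} ∫_ℝ ( ∫_{ℝ^m} γ^♯(ξ/ω, ω)·e^{i ξ·x} dξ )·σ^♯(ω)·|ω|^{−m} dω, where the outer integrand is absolutely integrable over ω ∈ ℝ \ {0}. -/

import Mathlib

open MeasureTheory Complex
open scoped RealInnerProductSpace

/-- Fourier transform in the bias variable: `φ^♯(ω) = ∫ φ(b) e^{-iωb} db`. -/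
noncomputable def biasFourier (φ : ℝ → ℂ) (ω : ℝ) : ℂ :=
  ∫ b : ℝ, φ b * Complex.exp (-Complex.I * ω * b)

/-- Fourier transform of `γ(a,b)` in the bias variable `b`. -/
noncomputable def gammaSharp (m : ℕ) (γ : EuclideanSpace ℝ (Fin m) × ℝ → ℂ)
    (a : EuclideanSpace ℝ (Fin m)) (ω : ℝ) : ℂ :=
  ∫ b : ℝ, γ (a, b) * Complex.exp (-Complex.I * ω * b)

/-!
Write `σ` by Fourier inversion, `σ(s) = (2π)⁻¹ ∫ σ^♯(ω) e^{iωs} dω`. For a.e. `a`, Fubini in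
`(b, ω)` turns `∫ γ(a,b) σ(a·x - b) db` into `(2π)⁻¹ ∫ γ^♯(a,ω) σ^♯(ω) e^{iω a·x} dω`; since
`|γ^♯(a,ω)| ≤ ∫ |γ(a,b)| db` and `σ^♯` is integrable, Fubini in `(a, ω)` is also legitimate, and for
`ω ≠ 0` the substitution `ξ = ω a` in the inner integral produces the Jacobian `|ω|^{-m}`.
-/

open SchwartzMap FourierTransform Real

lemma biasFourier_eq_fourier (φ : ℝ → ℂ) (ω : ℝ) :
    biasFourier φ ω = 𝓕 φ (ω / (2 * π)) := by
  rw [Real.fourier_real_eq_integral_exp_smul, biasFourier]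
  congr 1 with b
  rw [smul_eq_mul, mul_comm]
  congr 2
  push_cast
  field_simp

lemma norm_biasFourier_le (φ : ℝ → ℂ) (ω : ℝ) : ‖biasFourier φ ω‖ ≤ ∫ b, ‖φ b‖ := by
  refine (norm_integral_le_integral_norm _).trans_eq (integral_congr_ae (.of_forall fun b ↦ ?_))
  have : -I * ω * b = I * ((-(ω * b) : ℝ) : ℂ) := by push_cast; ring
  simp only [norm_mul, this, norm_exp_I_mul_ofReal, mul_one]

namespace SchwartzMap

lemma biasFourier_eq (σ : 𝓢(ℝ, ℂ)) : biasFourier σ = fun ω ↦ (𝓕 σ : 𝓢(ℝ, ℂ)) (ω / (2 * π)) := by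
  ext ω
  rw [biasFourier_eq_fourier, fourier_coe]

lemma integrable_biasFourier (σ : 𝓢(ℝ, ℂ)) : Integrable (biasFourier σ) := by
  rw [biasFourier_eq]
  simp_rw [div_eq_inv_mul, ← smul_eq_mul]
  exact (integrable_comp_smul_iff volume ((𝓕 σ : 𝓢(ℝ, ℂ)) : ℝ → ℂ)
    (by positivity : (2 * π)⁻¹ ≠ 0)).2 (𝓕 σ).integrable

lemma eq_inv_two_pi_mul_integral_biasFourier (σ : 𝓢(ℝ, ℂ)) (s : ℝ) :
    σ s = (2 * (π : ℂ))⁻¹ * ∫ ω, biasFourier σ ω * exp (I * ω * s) := by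
  set g : ℝ → ℂ := fun w ↦ (𝓕 σ : 𝓢(ℝ, ℂ)) w * exp (I * ((2 * π * w * s : ℝ) : ℂ))
  have hg : ∀ ω : ℝ, biasFourier σ ω * exp (I * ω * s) = g (ω / (2 * π)) := by
    intro ω
    rw [biasFourier_eq]
    congr 2
    push_cast
    field_simp
  simp_rw [hg, Measure.integral_comp_div g, abs_of_pos two_pi_pos, Complex.real_smul]
  rw [← mul_assoc, ofReal_mul, ofReal_ofNat, inv_mul_cancel₀ (by simp [pi_ne_zero]), one_mul]
  conv_lhs => rw [← FourierPair.fourierInv_fourier_eq (F := 𝓢(ℝ, ℂ)) σ, fourierInv_coe,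
    Real.fourierInv_eq']
  congr 1 with w
  simp only [g, smul_eq_mul, RCLike.inner_apply', RCLike.conj_to_real]
  rw [mul_comm]
  congr 2
  push_cast
  ring

end SchwartzMap

lemma integral_mul_comp_sub_eq_integral_biasFourier {f : ℝ → ℂ} (hf : Integrable f)
    (σ : 𝓢(ℝ, ℂ)) (t : ℝ) :
    ∫ b, f b * σ (t - b)
      = (2 * (π : ℂ))⁻¹ * ∫ ω, biasFourier f ω * biasFourier σ ω * exp (I * ω * t) := by
  have hint : Integrable (Function.uncurry fun b ω ↦
      f b * biasFourier σ ω * exp (I * ω * (t - b))) (volume.prod volume) := by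
    refine (hf.mul_prod σ.integrable_biasFourier).mul_bdd (c := 1)
      (Continuous.aestronglyMeasurable (by fun_prop)) (.of_forall fun z ↦ ?_)
    simpa [mul_assoc] using (norm_exp_I_mul_ofReal (z.2 * (t - z.1))).le
  have hinner : ∀ ω : ℝ, ∫ b, f b * biasFourier σ ω * exp (I * ω * (t - b))
      = biasFourier f ω * biasFourier σ ω * exp (I * ω * t) := by
    intro ω
    simp only [biasFourier]
    rw [← integral_mul_const, ← integral_mul_const]
    congr 1 with b
    rw [mul_sub, sub_eq_add_neg, Complex.exp_add]
    ring_nf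
  calc ∫ b, f b * σ (t - b)
      = ∫ b, (2 * (π : ℂ))⁻¹ * ∫ ω, f b * biasFourier σ ω * exp (I * ω * (t - b)) := by
        congr 1 with b
        rw [σ.eq_inv_two_pi_mul_integral_biasFourier, ← integral_const_mul, ← integral_const_mul,
          ← integral_const_mul]
        congr 1 with ω
        push_cast
        ring
    _ = (2 * (π : ℂ))⁻¹ * ∫ ω, ∫ b, f b * biasFourier σ ω * exp (I * ω * (t - b)) := by
        rw [integral_const_mul, integral_integral_swap hint]
    _ = _ := by simp_rw [hinner]

variable {m : ℕ}

lemma stronglyMeasurable_uncurry_gammaSharp {γ : EuclideanSpace ℝ (Fin m) × ℝ → ℂ}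
    (hγ : StronglyMeasurable γ) : StronglyMeasurable (Function.uncurry (gammaSharp m γ)) :=
  StronglyMeasurable.integral_prod_right'
    (f := fun q : (EuclideanSpace ℝ (Fin m) × ℝ) × ℝ ↦ γ (q.1.1, q.2) * exp (-I * q.1.2 * q.2))
    ((hγ.comp_measurable (by fun_prop)).mul (Continuous.stronglyMeasurable (by fun_prop)))

lemma integrable_gammaSharp_mul_mul_exp_inner {γ : EuclideanSpace ℝ (Fin m) × ℝ → ℂ}
    (hγm : StronglyMeasurable γ) (hγ : Integrable γ (volume.prod volume)) {ψ : ℝ → ℂ}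
    (hψ : Integrable ψ) (x : EuclideanSpace ℝ (Fin m)) :
    Integrable (Function.uncurry fun a ω ↦ gammaSharp m γ a ω * ψ ω * exp (I * ω * ⟪a, x⟫))
      (volume.prod volume) := by
  refine Integrable.mul_bdd (c := 1) ?_ (Continuous.aestronglyMeasurable (by fun_prop))
    (.of_forall fun z ↦ ?_)
  · refine (hγ.integral_norm_prod_left.mul_prod hψ.norm).mono'
      ((stronglyMeasurable_uncurry_gammaSharp hγm).aestronglyMeasurable.mul hψ.1.comp_snd)
      (.of_forall fun z ↦ ?_)
    rw [norm_mul]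
    exact mul_le_mul_of_nonneg_right (norm_biasFourier_le _ _) (norm_nonneg _)
  · simpa [mul_assoc] using (norm_exp_I_mul_ofReal (z.2 * ⟪z.1, x⟫)).le

lemma integral_inv_smul_mul_exp_inner (g : EuclideanSpace ℝ (Fin m) → ℂ) (c : ℂ)
    (x : EuclideanSpace ℝ (Fin m)) {ω : ℝ} (hω : ω ≠ 0) :
    (∫ ξ, g (ω⁻¹ • ξ) * exp (I * ⟪ξ, x⟫)) * c * ((|ω| ^ (-(m : ℤ)) : ℝ) : ℂ)
      = ∫ a, g a * c * exp (I * ω * ⟪a, x⟫) := by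
  set h : EuclideanSpace ℝ (Fin m) → ℂ := fun a ↦ g a * exp (I * ω * ⟪a, x⟫)
  have hξ : ∀ ξ, g (ω⁻¹ • ξ) * exp (I * ⟪ξ, x⟫) = h (ω⁻¹ • ξ) := by
    intro ξ
    simp only [h, real_inner_smul_left, ofReal_mul, ofReal_inv]
    rw [mul_assoc I, mul_inv_cancel_left₀ (ofReal_ne_zero.2 hω)]
  have hscale : ((|ω ^ m| : ℝ) : ℂ) * ((|ω| ^ (-(m : ℤ)) : ℝ) : ℂ) = 1 := by
    rw [← ofReal_mul, abs_pow, zpow_neg, zpow_natCast, mul_inv_cancel₀ (by positivity), ofReal_one]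
  have hmul : ∫ a, g a * c * exp (I * ω * ⟪a, x⟫) = (∫ a, h a) * c := by
    rw [← integral_mul_const]
    congr 1 with a
    ring
  simp_rw [hξ, Measure.integral_comp_inv_smul, finrank_euclideanSpace_fin, Complex.real_smul, hmul]
  linear_combination ((∫ a, h a) * c) * hscale

theorem integral_representation_change_of_variables_general (m : ℕ)
    (γ : SchwartzMap (EuclideanSpace ℝ (Fin m) × ℝ) ℂ) (σ : SchwartzMap ℝ ℂ)
    (x : EuclideanSpace ℝ (Fin m)) :
    IntegrableOn (fun ω : ℝ =>
        (∫ ξ : EuclideanSpace ℝ (Fin m),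
            gammaSharp m γ (ω⁻¹ • ξ) ω * Complex.exp (Complex.I * ⟪ξ, x⟫))
          * biasFourier σ ω * ((|ω| ^ (-(m : ℤ)) : ℝ) : ℂ)) {(0 : ℝ)}ᶜ ∧
    (∫ p : EuclideanSpace ℝ (Fin m) × ℝ, γ p * σ (⟪p.1, x⟫ - p.2))
      = (2 * (Real.pi : ℂ))⁻¹
          * ∫ ω : ℝ,
              (∫ ξ : EuclideanSpace ℝ (Fin m),
                  gammaSharp m γ (ω⁻¹ • ξ) ω * Complex.exp (Complex.I * ⟪ξ, x⟫))
                * biasFourier σ ω * ((|ω| ^ (-(m : ℤ)) : ℝ) : ℂ) := by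
  have hγ : Integrable (γ : EuclideanSpace ℝ (Fin m) × ℝ → ℂ) (volume.prod volume) :=
    γ.integrable
  have hG := integrable_gammaSharp_mul_mul_exp_inner γ.continuous.stronglyMeasurable hγ
    σ.integrable_biasFourier x
  have hrescale : ∀ᵐ ω : ℝ, ∫ a, gammaSharp m γ a ω * biasFourier σ ω * exp (I * ω * ⟪a, x⟫)
      = (∫ ξ, gammaSharp m γ (ω⁻¹ • ξ) ω * exp (I * ⟪ξ, x⟫)) * biasFourier σ ω
          * ((|ω| ^ (-(m : ℤ)) : ℝ) : ℂ) := by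
    filter_upwards [volume.ae_ne 0] with ω hω
    exact (integral_inv_smul_mul_exp_inner _ _ x hω).symm
  have hconv : ∀ᵐ a : EuclideanSpace ℝ (Fin m), ∫ b, γ (a, b) * σ (⟪a, x⟫ - b)
      = (2 * (π : ℂ))⁻¹ * ∫ ω, gammaSharp m γ a ω * biasFourier σ ω * exp (I * ω * ⟪a, x⟫) := by
    filter_upwards [hγ.prod_right_ae] with a ha
    exact integral_mul_comp_sub_eq_integral_biasFourier ha σ _
  have hprod : Integrable (fun p : EuclideanSpace ℝ (Fin m) × ℝ ↦ γ p * σ (⟪p.1, x⟫ - p.2))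
      (volume.prod volume) :=
    hγ.mul_bdd (Continuous.aestronglyMeasurable (by fun_prop))
      (.of_forall fun _ ↦ σ.norm_le_seminorm ℂ _)
  refine ⟨(hG.integral_prod_right.congr hrescale).integrableOn, ?_⟩
  calc ∫ p : EuclideanSpace ℝ (Fin m) × ℝ, γ p * σ (⟪p.1, x⟫ - p.2)
      = ∫ a, ∫ b, γ (a, b) * σ (⟪a, x⟫ - b) := by
        rw [Measure.volume_eq_prod, integral_prod _ hprod]
    _ = (2 * (π : ℂ))⁻¹ * ∫ ω, ∫ a, gammaSharp m γ a ω * biasFourier σ ω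
          * exp (I * ω * ⟪a, x⟫) := by
        rw [integral_congr_ae hconv, integral_const_mul, integral_integral_swap hG]
    _ = _ := by rw [integral_congr_ae hrescale]

theorem integral_representation_change_of_variables (m : ℕ) (hm : 1 ≤ m)
    (γ : SchwartzMap (EuclideanSpace ℝ (Fin m) × ℝ) ℂ) (σ : SchwartzMap ℝ ℂ)
    (x : EuclideanSpace ℝ (Fin m)) :
    IntegrableOn (fun ω : ℝ =>
        (∫ ξ : EuclideanSpace ℝ (Fin m),
            gammaSharp m γ (ω⁻¹ • ξ) ω * Complex.exp (Complex.I * ⟪ξ, x⟫))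
          * biasFourier σ ω * ((|ω| ^ (-(m : ℤ)) : ℝ) : ℂ)) {(0 : ℝ)}ᶜ ∧
    (∫ p : EuclideanSpace ℝ (Fin m) × ℝ, γ p * σ (⟪p.1, x⟫ - p.2))
      = (2 * (Real.pi : ℂ))⁻¹
          * ∫ ω : ℝ,
              (∫ ξ : EuclideanSpace ℝ (Fin m),
                  gammaSharp m γ (ω⁻¹ • ξ) ω * Complex.exp (Complex.I * ⟪ξ, x⟫))
                * biasFourier σ ω * ((|ω| ^ (-(m : ℤ)) : ℝ) : ℂ) :=
  integral_representation_change_of_variables_general m γ σ x
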